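/- arXiv:1105.3884 — 4 statements merged into one kernel-verified Lean document; each statement's English description precedes it below -/
import Mathlib

section
/- Let (X, M, *) be a compact fuzzy metric space. For every t₀ ∈ (0,∞) and every ε > 0, there exists η > 0 such that for all x, y ∈ X and all t with |t - t₀| < η, one has |M(x, y, t) - M(x, y, t₀)| < ε. -/
open Set MeasureTheory Filter Topology

noncomputable section

/-- The Łukasiewicz t-norm. -/
def luk (a b : ℝ) : ℝ := max (a + b - 1) 0

/-- A continuous t-norm on `[0,1]`. -/
structure IsContinuousTNorm (star : ℝ → ℝ → ℝ) : Prop where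
  maps_to : ∀ a b, a ∈ Icc (0:ℝ) 1 → b ∈ Icc (0:ℝ) 1 → star a b ∈ Icc (0:ℝ) 1
  comm : ∀ a b, a ∈ Icc (0:ℝ) 1 → b ∈ Icc (0:ℝ) 1 → star a b = star b a
  assoc : ∀ a b c, a ∈ Icc (0:ℝ) 1 → b ∈ Icc (0:ℝ) 1 → c ∈ Icc (0:ℝ) 1 →
    star (star a b) c = star a (star b c)
  continuous : ContinuousOn (fun p : ℝ × ℝ => star p.1 p.2) (Icc 0 1 ×ˢ Icc 0 1)
  one_right : ∀ a, a ∈ Icc (0:ℝ) 1 → star a 1 = a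
  mono : ∀ a b c d, a ∈ Icc (0:ℝ) 1 → b ∈ Icc (0:ℝ) 1 → c ∈ Icc (0:ℝ) 1 →
    d ∈ Icc (0:ℝ) 1 → a ≤ c → b ≤ d → star a b ≤ star c d

/-- A fuzzy metric (George–Veeramani) with respect to a t-norm `star`. -/
structure IsFuzzyMetric {X : Type*} (M : X → X → ℝ → ℝ) (star : ℝ → ℝ → ℝ) : Prop where
  pos : ∀ x y t, 0 < t → 0 < M x y t
  le_one : ∀ x y t, 0 < t → M x y t ≤ 1
  eq_one_iff : ∀ x y t, 0 < t → (M x y t = 1 ↔ x = y)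
  symm : ∀ x y t, 0 < t → M x y t = M y x t
  triangle : ∀ x y z t s, 0 < t → 0 < s → star (M x y t) (M y z s) ≤ M x z (t + s)
  continuousOn : ∀ x y, ContinuousOn (fun t => M x y t) (Ioi (0:ℝ))

/-- The open ball `B(x,r,t)` in a fuzzy metric space. -/
def fmBall {X : Type*} (M : X → X → ℝ → ℝ) (x : X) (r t : ℝ) : Set X :=
  {y | 1 - r < M x y t}

/-- The `r,t`-expansion `A^{r,t}` of a set `A`. -/
def fmExpand {X : Type*} (M : X → X → ℝ → ℝ) (A : Set X) (r t : ℝ) : Set X :=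
  ⋃ x ∈ A, fmBall M x r t

/-- The fuzzy metric `M` generates the given topology on `X`. -/
def GeneratesTopology {X : Type*} [TopologicalSpace X] (M : X → X → ℝ → ℝ) : Prop :=
  TopologicalSpace.IsTopologicalBasis
    {s : Set X | ∃ x r t, 0 < r ∧ r < 1 ∧ 0 < t ∧ s = fmBall M x r t}

/-- The set of admissible radii in the definition of the fuzzy Prokhorov metric. -/
def prokSet {X : Type*} [MeasurableSpace X] (M : X → X → ℝ → ℝ)
    (μ ν : Measure X) (t : ℝ) : Set ℝ :=
  {r | 0 < r ∧ r < 1 ∧ ∀ A : Set X, MeasurableSet A →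
    μ A ≤ ν (fmExpand M A r t) + ENNReal.ofReal r ∧
    ν A ≤ μ (fmExpand M A r t) + ENNReal.ofReal r}

/-- The fuzzy Prokhorov function `M̂` on measures. -/
def fuzzyProkhorov {X : Type*} [MeasurableSpace X] (M : X → X → ℝ → ℝ)
    (μ ν : Measure X) (t : ℝ) : ℝ :=
  1 - sInf (prokSet M μ ν t)

/-- Values of a fuzzy metric lie in `[0,1]`. -/
lemma IsFuzzyMetric.mem_Icc {X : Type*} {M : X → X → ℝ → ℝ} {star : ℝ → ℝ → ℝ}
    (hM : IsFuzzyMetric M star) (x y : X) {t : ℝ} (ht : 0 < t) :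
    M x y t ∈ Icc (0:ℝ) 1 :=
  ⟨(hM.pos x y t ht).le, hM.le_one x y t ht⟩

/-- A fuzzy metric is nondecreasing in the time variable. -/
lemma IsFuzzyMetric.mono_t {X : Type*} {M : X → X → ℝ → ℝ} {star : ℝ → ℝ → ℝ}
    (hstar : IsContinuousTNorm star) (hM : IsFuzzyMetric M star) (x y : X)
    {s t : ℝ} (hs : 0 < s) (hst : s ≤ t) : M x y s ≤ M x y t := by
  rcases eq_or_lt_of_le hst with h | h
  · rw [h]
  · have htri := hM.triangle x y y s (t - s) hs (by linarith)
    have h1 : M y y (t - s) = 1 := (hM.eq_one_iff y y (t - s) (by linarith)).mpr rfl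
    rw [h1, hstar.one_right _ (hM.mem_Icc x y hs)] at htri
    simpa using htri

/-- Near `(1, c, 1)`, the double t-norm `star (1-r) (star c (1-r))` almost equals `c`,
uniformly in `c`. -/
lemma star_near {star : ℝ → ℝ → ℝ} (hstar : IsContinuousTNorm star) {ε : ℝ} (hε : 0 < ε) :
    ∃ r : ℝ, 0 < r ∧ r < 1 ∧ ∀ c ∈ Icc (0:ℝ) 1, c - ε ≤ star (1 - r) (star c (1 - r)) := by
  have hK : IsCompact (Icc (0:ℝ) 1 ×ˢ Icc (0:ℝ) 1) := isCompact_Icc.prod isCompact_Icc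
  have hUC := hK.uniformContinuousOn_of_continuous hstar.continuous
  rw [Metric.uniformContinuousOn_iff] at hUC
  obtain ⟨δ, hδ, H⟩ := hUC (ε/2) (by linarith)
  refine ⟨min (δ/2) (1/2), by positivity, ?_, ?_⟩
  · exact lt_of_le_of_lt (min_le_right _ _) (by norm_num)
  intro c hc
  set r := min (δ/2) (1/2) with hr
  have hr0 : 0 < r := by positivity
  have hr2 : r ≤ 1/2 := min_le_right _ _
  have hrδ : r < δ := lt_of_le_of_lt (min_le_left _ _) (by linarith)
  have h1r : (1 - r) ∈ Icc (0:ℝ) 1 := ⟨by linarith, by linarith⟩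
  have h1 : (1:ℝ) ∈ Icc (0:ℝ) 1 := ⟨zero_le_one, le_rfl⟩
  have hdist : ∀ u : ℝ, dist (1 - r) 1 < δ := by
    intro u
    rw [Real.dist_eq]
    rw [abs_of_nonpos (by linarith)]
    linarith
  -- step 1 : |star c (1-r) - c| < ε/2
  have hs1 : dist (star c (1 - r)) (star c 1) < ε / 2 := by
    have := H (c, 1 - r) (by exact ⟨hc, h1r⟩) (c, 1) (by exact ⟨hc, h1⟩) ?_
    · exact this
    · rw [Prod.dist_eq]
      simp only [dist_self]
      exact max_lt hδ (hdist 0)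
  rw [hstar.one_right c hc, Real.dist_eq] at hs1
  set d := star c (1 - r) with hd
  have hdI : d ∈ Icc (0:ℝ) 1 := hstar.maps_to c (1 - r) hc h1r
  -- step 2 : |star (1-r) d - d| < ε/2
  have hs2 : dist (star (1 - r) d) (star 1 d) < ε / 2 := by
    have := H (1 - r, d) (by exact ⟨h1r, hdI⟩) (1, d) (by exact ⟨h1, hdI⟩) ?_
    · exact this
    · rw [Prod.dist_eq]
      simp only [dist_self]
      exact max_lt (hdist 0) hδ
  rw [hstar.comm 1 d h1 hdI, hstar.one_right d hdI, Real.dist_eq] at hs2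
  have e1 := abs_lt.mp hs1
  have e2 := abs_lt.mp hs2
  linarith [e1.1, e1.2, e2.1, e2.2]

/-- uniform continuity of `M` in the time variable on a compact space. -/
theorem fuzzyMetric_uniform_time_continuity {X : Type*} [TopologicalSpace X] [CompactSpace X]
    (M : X → X → ℝ → ℝ) (star : ℝ → ℝ → ℝ) (hstar : IsContinuousTNorm star)
    (hM : IsFuzzyMetric M star) (hgen : GeneratesTopology M)
    (t₀ : ℝ) (ht₀ : 0 < t₀) (ε : ℝ) (hε : 0 < ε) :
    ∃ η > 0, ∀ x y : X, ∀ t : ℝ, 0 < t → |t - t₀| < η →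
      |M x y t - M x y t₀| < ε := by
  rcases isEmpty_or_nonempty X with hX | hX
  · exact ⟨1, one_pos, fun x => (IsEmpty.false x).elim⟩
  -- uniform continuity of the t-norm near (1, c, 1)
  obtain ⟨r, hr0, hr1, hkey⟩ := star_near hstar (show (0:ℝ) < ε/4 by linarith)
  -- pointwise choice of time-window for each pair
  have hpt : ∀ p : X × X, ∃ e : ℝ, 0 < e ∧ e ≤ t₀/8 ∧
      M p.1 p.2 (t₀ + 3*e) - M p.1 p.2 (t₀ - 3*e) < ε/2 := by
    intro p
    have hc : ContinuousAt (fun t => M p.1 p.2 t) t₀ :=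
      (hM.continuousOn p.1 p.2).continuousAt (isOpen_Ioi.mem_nhds ht₀)
    rw [Metric.continuousAt_iff] at hc
    obtain ⟨δ, hδ, H⟩ := hc (ε/8) (by linarith)
    refine ⟨min (δ/4) (t₀/8), by positivity, min_le_right _ _, ?_⟩
    set e := min (δ/4) (t₀/8) with he
    have he4 : e ≤ δ/4 := min_le_left _ _
    have h3 : 3*e < δ := by linarith
    have he0 : 0 < e := by positivity
    have h1 := H (x := t₀ + 3*e) (by rw [Real.dist_eq]; rw [show t₀ + 3*e - t₀ = 3*e by ring]; rw [abs_of_pos (by linarith)]; exact h3)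
    have h2 := H (x := t₀ - 3*e) (by rw [Real.dist_eq]; rw [show t₀ - 3*e - t₀ = -(3*e) by ring]; rw [abs_neg, abs_of_pos (by linarith)]; exact h3)
    rw [Real.dist_eq] at h1 h2
    have e1 := abs_lt.mp h1
    have e2 := abs_lt.mp h2
    linarith [e1.1, e1.2, e2.1, e2.2]
  choose e he0 he8 heP using hpt
  -- open cover of X × X
  have hball_open : ∀ (a : X) (s : ℝ), 0 < s → IsOpen (fmBall M a r s) := fun a s hs =>
    hgen.isOpen ⟨a, r, s, hr0, hr1, hs, rfl⟩
  have hcover : (univ : Set (X × X)) ⊆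
      ⋃ p : X × X, fmBall M p.1 r (e p) ×ˢ fmBall M p.2 r (e p) := by
    intro q _
    refine mem_iUnion.2 ⟨q, ?_, ?_⟩
    · show 1 - r < M q.1 q.1 (e q)
      rw [(hM.eq_one_iff q.1 q.1 (e q) (he0 q)).mpr rfl]; linarith
    · show 1 - r < M q.2 q.2 (e q)
      rw [(hM.eq_one_iff q.2 q.2 (e q) (he0 q)).mpr rfl]; linarith
  obtain ⟨s, hs⟩ := isCompact_univ.elim_finite_subcover
    (fun p : X × X => fmBall M p.1 r (e p) ×ˢ fmBall M p.2 r (e p))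
    (fun p => ((hball_open _ _ (he0 p)).prod (hball_open _ _ (he0 p)))) hcover
  have hsne : s.Nonempty := by
    obtain ⟨x₀⟩ := hX
    have := hs (mem_univ (x₀, x₀))
    rw [mem_iUnion₂] at this
    obtain ⟨p, hp, _⟩ := this
    exact ⟨p, hp⟩
  set η := s.inf' hsne e with hη
  have hη0 : 0 < η := by
    rw [hη, Finset.lt_inf'_iff]
    exact fun p _ => he0 p
  refine ⟨η, hη0, ?_⟩
  intro x y t ht htt
  -- find the covering pair
  have hxy := hs (mem_univ (x, y))
  rw [mem_iUnion₂] at hxy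
  obtain ⟨p, hps, hxyp⟩ := hxy
  obtain ⟨hx, hy⟩ := hxyp
  set a := p.1
  set b := p.2
  set ep := e p with hep
  have hepe : η ≤ ep := Finset.inf'_le e hps
  have hep0 : 0 < ep := he0 p
  have hep8 : ep ≤ t₀/8 := he8 p
  have hη8 : η ≤ t₀/8 := le_trans hepe hep8
  -- time positivity facts
  have hpos1 : 0 < t₀ + η := by linarith
  have hpos2 : 0 < t₀ - η := by linarith
  have hpos3 : 0 < t₀ - η - 2*ep := by linarith
  have hpos4 : 0 < t₀ - 3*ep := by linarith
  have hpos5 : 0 < t₀ + η + ep := by linarith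
  -- ball memberships
  have hax : 1 - r < M a x ep := hx
  have hby : 1 - r < M b y ep := hy
  have hyb : 1 - r < M y b ep := by rwa [hM.symm y b ep hep0]
  have hxa : 1 - r < M x a ep := by rwa [hM.symm x a ep hep0]
  have h1r : (1 - r) ∈ Icc (0:ℝ) 1 := ⟨by linarith, by linarith⟩
  set α := M x y (t₀ + η) with hα
  set β := M x y (t₀ - η) with hβ
  have hαI : α ∈ Icc (0:ℝ) 1 := hM.mem_Icc x y hpos1
  -- upper chain : α ≤ M a b (t₀+3ep) + ε/4
  have hup : α - ε/4 ≤ M a b (t₀ + 3*ep) := by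
    have T1 : star α (M y b ep) ≤ M x b (t₀ + η + ep) := by
      have := hM.triangle x y b (t₀ + η) ep hpos1 hep0
      convert this using 2
    have T2 : star (M a x ep) (M x b (t₀ + η + ep)) ≤ M a b (ep + (t₀ + η + ep)) :=
      hM.triangle a x b ep (t₀ + η + ep) hep0 hpos5
    have m1 : star α (1 - r) ≤ star α (M y b ep) :=
      hstar.mono α (1 - r) α (M y b ep) hαI h1r hαI (hM.mem_Icc y b hep0) le_rfl hyb.le
    have m2 : star (1 - r) (star α (1 - r)) ≤ star (M a x ep) (star α (M y b ep)) :=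
      hstar.mono (1 - r) (star α (1 - r)) (M a x ep) (star α (M y b ep)) h1r
        (hstar.maps_to α (1 - r) hαI h1r) (hM.mem_Icc a x hep0)
        (hstar.maps_to α (M y b ep) hαI (hM.mem_Icc y b hep0)) hax.le m1
    have m3 : star (M a x ep) (star α (M y b ep)) ≤ star (M a x ep) (M x b (t₀ + η + ep)) :=
      hstar.mono (M a x ep) (star α (M y b ep)) (M a x ep) (M x b (t₀ + η + ep))
        (hM.mem_Icc a x hep0) (hstar.maps_to α (M y b ep) hαI (hM.mem_Icc y b hep0))
        (hM.mem_Icc a x hep0) (hM.mem_Icc x b hpos5) le_rfl T1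
    have m4 : M a b (ep + (t₀ + η + ep)) ≤ M a b (t₀ + 3*ep) :=
      hM.mono_t hstar a b (by linarith) (by linarith)
    have hk := hkey α hαI
    linarith
  -- lower chain : M a b (t₀-3ep) - ε/4 ≤ β
  have hlow : M a b (t₀ - 3*ep) - ε/4 ≤ β := by
    set c := M a b (t₀ - 3*ep) with hc
    have hcI : c ∈ Icc (0:ℝ) 1 := hM.mem_Icc a b hpos4
    have hc' : c ≤ M a b (t₀ - η - 2*ep) :=
      hM.mono_t hstar a b hpos4 (by linarith)
    have T3 : star (M a b (t₀ - η - 2*ep)) (M b y ep) ≤ M a y (t₀ - η - 2*ep + ep) :=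
      hM.triangle a b y (t₀ - η - 2*ep) ep hpos3 hep0
    have hpos6 : 0 < t₀ - η - 2*ep + ep := by linarith
    have T4 : star (M x a ep) (M a y (t₀ - η - 2*ep + ep)) ≤ M x y (ep + (t₀ - η - 2*ep + ep)) :=
      hM.triangle x a y ep (t₀ - η - 2*ep + ep) hep0 hpos6
    have m1 : star c (1 - r) ≤ star (M a b (t₀ - η - 2*ep)) (M b y ep) :=
      hstar.mono c (1 - r) (M a b (t₀ - η - 2*ep)) (M b y ep) hcI h1r
        (hM.mem_Icc a b hpos3) (hM.mem_Icc b y hep0) hc' hby.le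
    have m2 : star (1 - r) (star c (1 - r)) ≤
        star (M x a ep) (star (M a b (t₀ - η - 2*ep)) (M b y ep)) :=
      hstar.mono (1 - r) (star c (1 - r)) (M x a ep)
        (star (M a b (t₀ - η - 2*ep)) (M b y ep)) h1r
        (hstar.maps_to c (1 - r) hcI h1r) (hM.mem_Icc x a hep0)
        (hstar.maps_to _ _ (hM.mem_Icc a b hpos3) (hM.mem_Icc b y hep0)) hxa.le m1
    have m3 : star (M x a ep) (star (M a b (t₀ - η - 2*ep)) (M b y ep)) ≤
        star (M x a ep) (M a y (t₀ - η - 2*ep + ep)) :=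
      hstar.mono (M x a ep) (star (M a b (t₀ - η - 2*ep)) (M b y ep)) (M x a ep)
        (M a y (t₀ - η - 2*ep + ep)) (hM.mem_Icc x a hep0)
        (hstar.maps_to _ _ (hM.mem_Icc a b hpos3) (hM.mem_Icc b y hep0))
        (hM.mem_Icc x a hep0) (hM.mem_Icc a y hpos6) le_rfl T3
    have heq : ep + (t₀ - η - 2*ep + ep) = t₀ - η := by ring
    rw [heq] at T4
    have hk := hkey c hcI
    linarith
  -- conclude
  have hαβ : α - β < ε := by
    have := heP p
    linarith
  have habs := abs_lt.mp htt
  have hb1 : β ≤ M x y t := hM.mono_t hstar x y hpos2 (by linarith [habs.1])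
  have hb2 : M x y t ≤ α := hM.mono_t hstar x y ht (by linarith [habs.2])
  have hb3 : β ≤ M x y t₀ := hM.mono_t hstar x y hpos2 (by linarith)
  have hb4 : M x y t₀ ≤ α := hM.mono_t hstar x y ht₀ (by linarith)
  rw [abs_lt]
  constructor <;> linarith
end
end

section
/- Let (X, M, *) be a compact fuzzy metric space, t₀ ∈ (0,∞), r₀ ∈ (0,1). For every ε > 0 there exists η > 0 such that B(x, r₀ + ε, t) ⊇ B(x, r₀, t₀) for every x ∈ X whenever |t - t₀| < η. -/
open Set MeasureTheory Filter Topology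

noncomputable section

/-! The triangle inequality through nearby centres gives
`star (M x x₀ δ) (star (M x₀ y₀ (t - 2δ)) (M y₀ y δ)) ≤ M x y t`, and, read backwards,
an upper bound for `M x y t` by `M x₀ y₀ (t + 2δ)`. Since `star c (star a c) → a` as `c → 1`
and `M x₀ y₀` is continuous in `t`, this makes `M` jointly continuous on `(0, ∞) × X × X`.
The tube lemma over the compact space `X × X` turns this into `M x y t → M x y t₀` uniformly
in `(x, y)`, which is the uniform enlargement of balls. -/

theorem ContinuousOn.eventually_forall_dist_lt {α β γ : Type*} [TopologicalSpace α]
    [TopologicalSpace β] [CompactSpace β] [PseudoMetricSpace γ] {f : α × β → γ} {U : Set α}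
    {x : α} (hU : U ∈ 𝓝 x) (hf : ContinuousOn f (U ×ˢ univ)) {ε : ℝ} (hε : 0 < ε) :
    ∀ᶠ t in 𝓝 x, ∀ b, dist (f (t, b)) (f (x, b)) < ε := by
  have hK := isCompact_univ.eventually_forall_of_forall_eventually
    (P := fun t b => dist (f (t, b)) (f (x, b)) < ε) fun b _ => by
      have hfb : ContinuousAt f (x, b) := hf.continuousAt (prod_mem_nhds hU univ_mem)
      have hslice : Tendsto (fun z : α × β => f (x, z.2)) (𝓝 (x, b)) (𝓝 (f (x, b))) :=
        hfb.tendsto.comp ((continuous_const.prodMk continuous_snd).tendsto (x, b))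
      exact (hfb.tendsto.dist hslice).eventually (gt_mem_nhds (by rwa [dist_self]))
  filter_upwards [hK] with t ht b using ht b (mem_univ b)

namespace IsContinuousTNorm

variable {star : ℝ → ℝ → ℝ}

theorem continuousWithinAt_star_star (hstar : IsContinuousTNorm star) {a : ℝ}
    (ha : a ∈ Icc (0 : ℝ) 1) :
    ContinuousWithinAt (fun c => star c (star a c)) (Icc 0 1) 1 := by
  have hinner : ContinuousOn (fun c => star a c) (Icc 0 1) :=
    hstar.continuous.comp (continuousOn_const.prodMk continuousOn_id)
      fun c hc => ⟨ha, hc⟩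
  have houter : ContinuousOn (fun c => star c (star a c)) (Icc 0 1) :=
    hstar.continuous.comp (continuousOn_id.prodMk hinner)
      fun c hc => ⟨hc, hstar.maps_to a c ha hc⟩
  exact houter 1 ⟨zero_le_one, le_rfl⟩

theorem star_one_star_one (hstar : IsContinuousTNorm star) {a : ℝ} (ha : a ∈ Icc (0 : ℝ) 1) :
    star 1 (star a 1) = a := by
  have hone : (1 : ℝ) ∈ Icc (0 : ℝ) 1 := ⟨zero_le_one, le_rfl⟩
  rw [hstar.one_right a ha, hstar.comm 1 a hone ha, hstar.one_right a ha]

theorem exists_lt_star_star (hstar : IsContinuousTNorm star) {a b : ℝ}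
    (ha : a ∈ Icc (0 : ℝ) 1) (hb : b < a) :
    ∃ c ∈ Ioo (0 : ℝ) 1, b < star c (star a c) := by
  have hlim := hstar.continuousWithinAt_star_star ha
  rw [ContinuousWithinAt, hstar.star_one_star_one ha] at hlim
  have hev : ∀ᶠ c in 𝓝[<] 1, b < star c (star a c) := by
    rw [← nhdsWithin_Ioo_eq_nhdsLT zero_lt_one]
    exact nhdsWithin_mono _ Ioo_subset_Icc_self (hlim.eventually (lt_mem_nhds hb))
  exact (hev.and (Ioo_mem_nhdsLT zero_lt_one)).exists.imp fun c hc => ⟨hc.2, hc.1⟩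

end IsContinuousTNorm

namespace IsFuzzyMetric

variable {X : Type*} {M : X → X → ℝ → ℝ} {star : ℝ → ℝ → ℝ}

theorem mem_Icc_s5 (hM : IsFuzzyMetric M star) (x y : X) {t : ℝ} (ht : 0 < t) :
    M x y t ∈ Icc (0 : ℝ) 1 :=
  ⟨(hM.pos x y t ht).le, hM.le_one x y t ht⟩

theorem self_eq_one (hM : IsFuzzyMetric M star) (x : X) {t : ℝ} (ht : 0 < t) : M x x t = 1 :=
  (hM.eq_one_iff x x t ht).2 rfl

theorem star_star_le (hM : IsFuzzyMetric M star) (hstar : IsContinuousTNorm star)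
    {x y z w : X} {s t u c a : ℝ} (hs : 0 < s) (ht : 0 < t) (hu : 0 < u)
    (hc : c ∈ Icc (0 : ℝ) 1) (ha : a ∈ Icc (0 : ℝ) 1)
    (hxy : c ≤ M x y s) (hyz : a ≤ M y z t) (hzw : c ≤ M z w u) :
    star c (star a c) ≤ M x w (s + t + u) := by
  have hyw : star a c ≤ M y w (t + u) :=
    (hstar.mono _ _ _ _ ha hc (hM.mem_Icc_s5 y z ht) (hM.mem_Icc_s5 z w hu) hyz hzw).trans
      (hM.triangle y z w t u ht hu)
  calc star c (star a c) ≤ star (M x y s) (M y w (t + u)) :=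
        hstar.mono _ _ _ _ hc (hstar.maps_to a c ha hc) (hM.mem_Icc_s5 x y hs)
          (hM.mem_Icc_s5 y w (add_pos ht hu)) hxy hyw
    _ ≤ M x w (s + (t + u)) := hM.triangle x y w s (t + u) hs (add_pos ht hu)
    _ = M x w (s + t + u) := by rw [add_assoc]

theorem fmBall_mem_nhds [TopologicalSpace X] (hM : IsFuzzyMetric M star)
    (hgen : GeneratesTopology M) (x : X) {r t : ℝ} (hr : r ∈ Ioo (0 : ℝ) 1) (ht : 0 < t) :
    fmBall M x r t ∈ 𝓝 x := by
  refine (hgen.isOpen ⟨x, r, t, hr.1, hr.2, ht, rfl⟩).mem_nhds ?_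
  change 1 - r < M x x t
  rw [hM.self_eq_one x ht]
  linarith [hr.1]

theorem eventually_nhds_mem_fmBall [TopologicalSpace X] (hM : IsFuzzyMetric M star)
    (hgen : GeneratesTopology M) (t₀ : ℝ) (x₀ y₀ : X) {c δ : ℝ} (hc : c ∈ Ioo (0 : ℝ) 1)
    (hδ : 0 < δ) :
    ∀ᶠ q : ℝ × X × X in 𝓝 (t₀, x₀, y₀),
      |q.1 - t₀| < δ ∧ c < M q.2.1 x₀ δ ∧ c < M y₀ q.2.2 δ := by
  have hr : 1 - c ∈ Ioo (0 : ℝ) 1 := ⟨by linarith [hc.2], by linarith [hc.1]⟩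
  filter_upwards [prod_mem_nhds (Metric.ball_mem_nhds t₀ hδ)
    (prod_mem_nhds (hM.fmBall_mem_nhds hgen x₀ hr hδ) (hM.fmBall_mem_nhds hgen y₀ hr hδ))]
    with ⟨t, x, y⟩ ⟨ht, hx, hy⟩
  simp only [fmBall, mem_ofPred_eq, sub_sub_cancel] at hx hy
  exact ⟨by rwa [← Real.dist_eq], hM.symm x₀ x δ hδ ▸ hx, hy⟩

theorem eventually_lt_uncurry [TopologicalSpace X] (hM : IsFuzzyMetric M star)
    (hstar : IsContinuousTNorm star) (hgen : GeneratesTopology M) {t₀ : ℝ} (ht₀ : 0 < t₀)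
    (x₀ y₀ : X) {b : ℝ} (hb : b < M x₀ y₀ t₀) :
    ∀ᶠ q : ℝ × X × X in 𝓝 (t₀, x₀, y₀), b < M q.2.1 q.2.2 q.1 := by
  obtain ⟨a, hba, ha⟩ := exists_between (max_lt hb (hM.pos x₀ y₀ t₀ ht₀))
  have ha01 : a ∈ Icc (0 : ℝ) 1 :=
    ⟨(le_max_right _ _).trans hba.le, ha.le.trans (hM.le_one x₀ y₀ t₀ ht₀)⟩
  obtain ⟨c, hc, hbc⟩ := hstar.exists_lt_star_star ha01 ((le_max_left _ _).trans_lt hba)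
  have hnear : ∀ᶠ s in 𝓝 t₀, 0 < s ∧ a < M x₀ y₀ s := (eventually_gt_nhds ht₀).and
    (((hM.continuousOn x₀ y₀).continuousAt (Ioi_mem_nhds ht₀)).eventually (lt_mem_nhds ha))
  obtain ⟨ε, hε, hnear⟩ := Metric.eventually_nhds_iff.1 hnear
  have hε3 : 0 < ε / 3 := by positivity
  filter_upwards [hM.eventually_nhds_mem_fmBall hgen t₀ x₀ y₀ hc hε3]
    with ⟨t, x, y⟩ ⟨ht, hx, hy⟩
  obtain ⟨hs, has⟩ := hnear (y := t - 2 * (ε / 3)) (by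
    rw [Real.dist_eq, abs_lt] at *; constructor <;> linarith)
  calc b < star c (star a c) := hbc
    _ ≤ M x y (ε / 3 + (t - 2 * (ε / 3)) + ε / 3) :=
      hM.star_star_le hstar hε3 hs hε3 (Ioo_subset_Icc_self hc) ha01
        hx.le has.le hy.le
    _ = M x y t := by ring_nf

theorem eventually_uncurry_lt [TopologicalSpace X] (hM : IsFuzzyMetric M star)
    (hstar : IsContinuousTNorm star) (hgen : GeneratesTopology M) {t₀ : ℝ} (ht₀ : 0 < t₀)
    (x₀ y₀ : X) {b : ℝ} (hb : M x₀ y₀ t₀ < b) :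
    ∀ᶠ q : ℝ × X × X in 𝓝 (t₀, x₀, y₀), M q.2.1 q.2.2 q.1 < b := by
  have hpos : ∀ᶠ q : ℝ × X × X in 𝓝 (t₀, x₀, y₀), 0 < q.1 :=
    (continuous_fst.tendsto _).eventually (eventually_gt_nhds ht₀)
  rcases lt_or_ge 1 b with hb1 | hb1
  · filter_upwards [hpos] with q hq using (hM.le_one _ _ _ hq).trans_lt hb1
  obtain ⟨a, hMa, hab⟩ := exists_between hb
  have hb01 : b ∈ Icc (0 : ℝ) 1 := ⟨(hM.pos x₀ y₀ t₀ ht₀).le.trans hb.le, hb1⟩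
  obtain ⟨c, hc, hac⟩ := hstar.exists_lt_star_star hb01 hab
  have hnear : ∀ᶠ s in 𝓝 t₀, M x₀ y₀ s < a :=
    ((hM.continuousOn x₀ y₀).continuousAt (Ioi_mem_nhds ht₀)).eventually (gt_mem_nhds hMa)
  obtain ⟨ε, hε, hnear⟩ := Metric.eventually_nhds_iff.1 hnear
  have hε3 : 0 < ε / 3 := by positivity
  filter_upwards [hM.eventually_nhds_mem_fmBall hgen t₀ x₀ y₀ hc hε3, hpos]
    with ⟨t, x, y⟩ ⟨ht, hx, hy⟩ htpos
  by_contra! hbt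
  have hfar : a < M x₀ y₀ (ε / 3 + t + ε / 3) :=
    hac.trans_le (hM.star_star_le hstar hε3 htpos hε3 (Ioo_subset_Icc_self hc) hb01
      (by rw [hM.symm x₀ x _ hε3]; exact hx.le) hbt (by rw [hM.symm y y₀ _ hε3]; exact hy.le))
  have hclose := hnear (y := ε / 3 + t + ε / 3) (by
    rw [Real.dist_eq, abs_lt] at *; constructor <;> linarith)
  linarith

theorem continuousOn_uncurry [TopologicalSpace X] (hM : IsFuzzyMetric M star)
    (hstar : IsContinuousTNorm star) (hgen : GeneratesTopology M) :
    ContinuousOn (fun q : ℝ × X × X => M q.2.1 q.2.2 q.1) (Ioi 0 ×ˢ univ) := by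
  rintro ⟨t₀, x₀, y₀⟩ ⟨ht₀, -⟩
  exact ContinuousAt.continuousWithinAt <| tendsto_order.2
    ⟨fun b hb => hM.eventually_lt_uncurry hstar hgen ht₀ x₀ y₀ hb,
      fun b hb => hM.eventually_uncurry_lt hstar hgen ht₀ x₀ y₀ hb⟩

end IsFuzzyMetric

theorem fmBall_uniform_enlarge_general {X : Type*} [TopologicalSpace X] [CompactSpace X]
    (M : X → X → ℝ → ℝ) (star : ℝ → ℝ → ℝ) (hstar : IsContinuousTNorm star)
    (hM : IsFuzzyMetric M star) (hgen : GeneratesTopology M)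
    (t₀ r₀ : ℝ) (ht₀ : 0 < t₀) (ε : ℝ) (hε : 0 < ε) :
    ∃ η > 0, ∀ x : X, ∀ t : ℝ, 0 < t → |t - t₀| < η →
      fmBall M x r₀ t₀ ⊆ fmBall M x (r₀ + ε) t := by
  obtain ⟨η, hη, hclose⟩ := Metric.eventually_nhds_iff.1
    ((hM.continuousOn_uncurry hstar hgen).eventually_forall_dist_lt (Ioi_mem_nhds ht₀) hε)
  refine ⟨η, hη, fun x t _ ht y hy => ?_⟩
  have hxy := hclose (y := t) (by rwa [Real.dist_eq]) (x, y)
  simp only [fmBall, mem_ofPred_eq, Real.dist_eq, abs_lt] at hy hxy ⊢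
  linarith

/-- `B(x, r₀+ε, t) ⊇ B(x, r₀, t₀)` for `t` near `t₀`, uniformly in `x`. -/
theorem fmBall_uniform_enlarge {X : Type*} [TopologicalSpace X] [CompactSpace X]
    (M : X → X → ℝ → ℝ) (star : ℝ → ℝ → ℝ) (hstar : IsContinuousTNorm star)
    (hM : IsFuzzyMetric M star) (hgen : GeneratesTopology M)
    (t₀ r₀ : ℝ) (ht₀ : 0 < t₀) (hr₀ : r₀ ∈ Ioo (0:ℝ) 1) (ε : ℝ) (hε : 0 < ε) :
    ∃ η > 0, ∀ x : X, ∀ t : ℝ, 0 < t → |t - t₀| < η →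
      fmBall M x r₀ t₀ ⊆ fmBall M x (r₀ + ε) t :=
  fmBall_uniform_enlarge_general M star hstar hM hgen t₀ r₀ ht₀ ε hε
end
end

section
/- With notation as above, M̂(μ, ν, t) = 1 for some t > 0 if and only if μ = ν. -/
/-!
Since the fuzzy balls are open, `(x, y) ↦ M x y t` is lower semicontinuous, so on the compact
space `X × X` it is bounded below by some `m > 0`; hence every radius `r > 1 - m` is admissible
and the infimum defining `M̂` is taken over a nonempty set. Admissible radii are closed upwards,
so `M̂(μ, ν, t) = 1` means that every `r ∈ (0, 1)` is admissible. For closed `A` the expansions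
`A^{r,t}` decrease to `A` as `r → 0` (if `y` lies in every `A^{r,t}`, a cluster point `x ∈ A`
of points of `A` that are `r`-close to `y` satisfies `M x y (2t) = 1`), so continuity from above
gives `μ A ≤ ν A` and `ν A ≤ μ A`, and two finite measures agreeing on closed sets are equal.
-/

open Set MeasureTheory Filter Topology

noncomputable section

namespace IsFuzzyMetric

variable {X : Type*} {M : X → X → ℝ → ℝ}

lemma add_sub_one_le (hM : IsFuzzyMetric M luk) (x y z : X) {t s : ℝ} (ht : 0 < t)
    (hs : 0 < s) :
    M x y t + M y z s - 1 ≤ M x z (t + s) :=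
  (le_max_left _ _).trans (hM.triangle x y z t s ht hs)

lemma mem_fmBall_self (hM : IsFuzzyMetric M luk) (x : X) {r t : ℝ} (hr : 0 < r) (ht : 0 < t) :
    x ∈ fmBall M x r t := by
  show 1 - r < M x x t
  linarith [(hM.eq_one_iff x x t ht).2 rfl]

lemma subset_fmExpand (hM : IsFuzzyMetric M luk) (A : Set X) {r t : ℝ} (hr : 0 < r)
    (ht : 0 < t) : A ⊆ fmExpand M A r t := fun x hx =>
  mem_biUnion hx (hM.mem_fmBall_self x hr ht)

lemma fmExpand_mono (A : Set X) {r r' : ℝ} (h : r ≤ r') (t : ℝ) :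
    fmExpand M A r t ⊆ fmExpand M A r' t :=
  iUnion₂_mono fun _ _ _ (hy : 1 - r < _) => show 1 - r' < _ by linarith

lemma exists_lt_apply_of_lt (hM : IsFuzzyMetric M luk) {x y : X} {c t : ℝ} (ht : 0 < t)
    (h : c < M x y t) : ∃ s ∈ Ioo 0 t, c < M x y s := by
  have hcont : ContinuousWithinAt (M x y) (Iio t) t :=
    ((hM.continuousOn x y).continuousAt (Ioi_mem_nhds ht)).continuousWithinAt
  exact ((hcont.eventually (lt_mem_nhds h)).and (Ioo_mem_nhdsLT ht)).exists.imp
    fun s hs => ⟨hs.2, hs.1⟩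

lemma isOpen_fmBall [TopologicalSpace X] (hM : IsFuzzyMetric M luk)
    (hgen : GeneratesTopology M) (x : X) (r : ℝ) {t : ℝ} (ht : 0 < t) :
    IsOpen (fmBall M x r t) := by
  rw [hgen.isOpen_iff]
  intro y (hy : 1 - r < M x y t)
  obtain ⟨s, ⟨hs, hst⟩, hxy⟩ := hM.exists_lt_apply_of_lt ht hy
  set δ := min (M x y s - (1 - r)) (1 / 2)
  have hδ : 0 < δ := lt_min (by linarith) one_half_pos
  have hδ₁ : δ < 1 := by linarith [min_le_right (M x y s - (1 - r)) (1 / 2)]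
  refine ⟨fmBall M y δ (t - s), ⟨y, δ, t - s, hδ, hδ₁, sub_pos.2 hst, rfl⟩,
    hM.mem_fmBall_self y hδ (sub_pos.2 hst), fun w (hw : 1 - δ < M y w (t - s)) => ?_⟩
  have htri := hM.add_sub_one_le x y w hs (sub_pos.2 hst)
  rw [add_sub_cancel] at htri
  show 1 - r < M x w t
  linarith [min_le_left (M x y s - (1 - r)) (1 / 2)]

lemma isOpen_fmExpand [TopologicalSpace X] (hM : IsFuzzyMetric M luk)
    (hgen : GeneratesTopology M) (A : Set X) (r : ℝ) {t : ℝ} (ht : 0 < t) :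
    IsOpen (fmExpand M A r t) :=
  isOpen_biUnion fun x _ => hM.isOpen_fmBall hgen x r ht

lemma lowerSemicontinuous_uncurry [TopologicalSpace X] (hM : IsFuzzyMetric M luk)
    (hgen : GeneratesTopology M) {t : ℝ} (ht : 0 < t) :
    LowerSemicontinuous fun p : X × X => M p.1 p.2 t := by
  rintro ⟨x, y⟩ c (hc : c < M x y t)
  obtain ⟨s, ⟨hs, hst⟩, hxy⟩ := hM.exists_lt_apply_of_lt ht hc
  set ε := (t - s) / 2
  have hε : 0 < ε := half_pos (sub_pos.2 hst)
  set δ := (M x y s - c) / 2 with hδ_def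
  have hδ : 0 < δ := by linarith
  have hnhds : fmBall M x δ ε ×ˢ fmBall M y δ ε ∈ 𝓝 (x, y) :=
    prod_mem_nhds ((hM.isOpen_fmBall hgen x δ hε).mem_nhds (hM.mem_fmBall_self x hδ hε))
      ((hM.isOpen_fmBall hgen y δ hε).mem_nhds (hM.mem_fmBall_self y hδ hε))
  filter_upwards [hnhds]
  rintro ⟨x', y'⟩ ⟨hx' : 1 - δ < M x x' ε, hy' : 1 - δ < M y y' ε⟩
  have h₁ := hM.add_sub_one_le x y y' hs hε
  have h₂ := hM.add_sub_one_le x' x y' hε (add_pos hs hε)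
  rw [show ε + (s + ε) = t by ring] at h₂
  show c < M x' y' t
  linarith [hM.symm x x' ε hε]

lemma exists_pos_le [TopologicalSpace X] [CompactSpace X] [Nonempty X]
    (hM : IsFuzzyMetric M luk) (hgen : GeneratesTopology M) {t : ℝ} (ht : 0 < t) :
    ∃ m > 0, ∀ x y, m ≤ M x y t := by
  obtain ⟨p, -, hp⟩ := ((hM.lowerSemicontinuous_uncurry hgen ht).lowerSemicontinuousOn univ
    ).exists_isMinOn univ_nonempty isCompact_univ
  exact ⟨M p.1 p.2 t, hM.pos _ _ _ ht, fun x y => hp (mem_univ (x, y))⟩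

lemma biInter_fmExpand_eq [TopologicalSpace X] [CompactSpace X] (hM : IsFuzzyMetric M luk)
    (hgen : GeneratesTopology M) {A : Set X} (hA : IsClosed A) {t : ℝ} (ht : 0 < t) :
    ⋂ r > (0 : ℝ), fmExpand M A r t = A := by
  refine Subset.antisymm (fun y hy => ?_)
    (subset_iInter₂ fun r hr => hM.subset_fmExpand A hr ht)
  have hnear : ∀ r > (0 : ℝ), ∃ x ∈ A, 1 - r < M x y t := fun r hr =>
    let ⟨x, hxA, hxy⟩ := mem_iUnion₂.mp (mem_iInter₂.mp hy r hr)
    ⟨x, hxA, hxy⟩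
  have : Nonempty X := ⟨y⟩
  choose! u huA hu using hnear
  obtain ⟨x, hxA, hx⟩ := hA.isCompact.exists_mapClusterPt (f := 𝓝[>] (0 : ℝ)) (u := u)
    (tendsto_principal.2 (eventually_mem_nhdsWithin.mono huA))
  have hxy : ∀ ε > 0, 1 < M x y (t + t) + ε := fun ε hε => by
    have hball := (hM.isOpen_fmBall hgen x (ε / 2) ht).mem_nhds
      (hM.mem_fmBall_self x (half_pos hε) ht)
    obtain ⟨r, (hr : 1 - ε / 2 < M x (u r) t), hr0, hrε⟩ :=
      ((mapClusterPt_iff_frequently.1 hx _ hball).and_eventually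
        (Ioo_mem_nhdsGT (half_pos hε))).exists
    linarith [hu r hr0, hM.add_sub_one_le x (u r) y ht ht]
  have hone : M x y (t + t) = 1 :=
    le_antisymm (hM.le_one x y _ (add_pos ht ht)) (le_of_forall_pos_lt_add hxy)
  exact (hM.eq_one_iff x y _ (add_pos ht ht)).1 hone ▸ hxA

lemma measure_le_of_forall_le_fmExpand [TopologicalSpace X] [CompactSpace X]
    [MeasurableSpace X] [OpensMeasurableSpace X] (hM : IsFuzzyMetric M luk)
    (hgen : GeneratesTopology M) {μ ν : Measure X} [IsFiniteMeasure ν] {A : Set X}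
    (hA : IsClosed A) {t : ℝ} (ht : 0 < t)
    (h : ∀ r ∈ Ioo (0 : ℝ) 1, μ A ≤ ν (fmExpand M A r t) + ENNReal.ofReal r) : μ A ≤ ν A := by
  have hexpand : Tendsto (fun r => ν (fmExpand M A r t)) (𝓝[>] 0) (𝓝 (ν A)) := by
    have := tendsto_measure_biInter_gt
      (fun r _ => (hM.isOpen_fmExpand hgen A r ht).measurableSet.nullMeasurableSet)
      (fun _ _ _ hij => fmExpand_mono A hij t) ⟨1, one_pos, measure_ne_top ν _⟩
    rwa [hM.biInter_fmExpand_eq hgen hA ht] at this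
  have hradius : Tendsto (fun r => ENNReal.ofReal r) (𝓝[>] 0) (𝓝 0) := by
    simpa using (ENNReal.continuous_ofReal.tendsto 0).mono_left nhdsWithin_le_nhds
  refine ge_of_tendsto (by simpa using hexpand.add hradius) ?_
  filter_upwards [Ioo_mem_nhdsGT one_pos] using h

end IsFuzzyMetric

section prokSet

variable {X : Type*} [MeasurableSpace X] {M : X → X → ℝ → ℝ} {μ ν : Measure X} {t : ℝ}

lemma prokSet_subset_Ioo : prokSet M μ ν t ⊆ Ioo 0 1 := fun _ hr => ⟨hr.1, hr.2.1⟩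

lemma mem_prokSet_of_le {r r' : ℝ} (hr : r ∈ prokSet M μ ν t) (hrr' : r ≤ r') (hr' : r' < 1) :
    r' ∈ prokSet M μ ν t := by
  refine ⟨hr.1.trans_le hrr', hr', fun A hA => ?_⟩
  have hexpand (κ : Measure X) : κ (fmExpand M A r t) ≤ κ (fmExpand M A r' t) :=
    measure_mono (IsFuzzyMetric.fmExpand_mono A hrr' t)
  have hradius := ENNReal.ofReal_le_ofReal hrr'
  exact ⟨(hr.2.2 A hA).1.trans (add_le_add (hexpand ν) hradius),
    (hr.2.2 A hA).2.trans (add_le_add (hexpand μ) hradius)⟩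

lemma fuzzyProkhorov_eq_one_iff_prokSet_eq_Ioo (hne : (prokSet M μ ν t).Nonempty) :
    fuzzyProkhorov M μ ν t = 1 ↔ prokSet M μ ν t = Ioo 0 1 := by
  rw [fuzzyProkhorov, sub_eq_self]
  refine ⟨fun h0 => prokSet_subset_Ioo.antisymm fun r hr => ?_,
    fun h => by rw [h, csInf_Ioo one_pos]⟩
  obtain ⟨r', hr', hr'r⟩ := exists_lt_of_csInf_lt hne (h0 ▸ hr.1)
  exact mem_prokSet_of_le hr' hr'r.le hr.2

lemma measure_le_measure_fmExpand [IsProbabilityMeasure μ] [IsProbabilityMeasure ν] {r : ℝ}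
    (hr : ∀ x y, 1 - r < M x y t) (A : Set X) : μ A ≤ ν (fmExpand M A r t) := by
  rcases A.eq_empty_or_nonempty with rfl | ⟨a, ha⟩
  · simp
  have huniv : fmExpand M A r t = univ := eq_univ_of_forall fun y => mem_biUnion ha (hr a y)
  rw [huniv, measure_univ]
  exact prob_le_one

lemma IsFuzzyMetric.prokSet_self (hM : IsFuzzyMetric M luk) (ht : 0 < t) :
    prokSet M μ μ t = Ioo 0 1 := by
  refine prokSet_subset_Ioo.antisymm fun r hr => ⟨hr.1, hr.2, fun A _ => ?_⟩
  have hA : μ A ≤ μ (fmExpand M A r t) + ENNReal.ofReal r :=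
    (measure_mono (hM.subset_fmExpand A hr.1 ht)).trans le_self_add
  exact ⟨hA, hA⟩

lemma IsFuzzyMetric.prokSet_nonempty [TopologicalSpace X] [CompactSpace X]
    [IsProbabilityMeasure μ] [IsProbabilityMeasure ν] (hM : IsFuzzyMetric M luk)
    (hgen : GeneratesTopology M) (ht : 0 < t) : (prokSet M μ ν t).Nonempty := by
  have := nonempty_of_isProbabilityMeasure μ
  obtain ⟨m, hm, hmM⟩ := hM.exists_pos_le hgen ht
  obtain ⟨x₀⟩ := this
  have hr : ∀ x y, 1 - (1 - m / 2) < M x y t := fun x y => by linarith [hmM x y]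
  exact ⟨1 - m / 2, by linarith [hmM x₀ x₀, hM.le_one x₀ x₀ t ht], by linarith,
    fun A _ => ⟨(measure_le_measure_fmExpand hr A).trans le_self_add,
      (measure_le_measure_fmExpand hr A).trans le_self_add⟩⟩

end prokSet

/-- `M̂(μ,ν,t) = 1` for some `t > 0` iff `μ = ν`. -/
theorem fuzzyProkhorov_eq_one_iff {X : Type*} [TopologicalSpace X] [CompactSpace X]
    [MeasurableSpace X] [BorelSpace X]
    (M : X → X → ℝ → ℝ) (hM : IsFuzzyMetric M luk) (hgen : GeneratesTopology M)
    (μ ν : ProbabilityMeasure X) :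
    (∃ t : ℝ, 0 < t ∧ fuzzyProkhorov M (μ : Measure X) (ν : Measure X) t = 1) ↔ μ = ν := by
  refine ⟨fun ⟨t, ht, h⟩ => ?_, fun h => ⟨1, one_pos, h ▸ ?_⟩⟩
  · have hIoo := (fuzzyProkhorov_eq_one_iff_prokSet_eq_Ioo (hM.prokSet_nonempty hgen ht)).1 h
    have hadm (A : Set X) (hA : IsClosed A) (r : ℝ) (hr : r ∈ Ioo (0 : ℝ) 1) :=
      (hIoo ▸ hr : r ∈ prokSet M μ ν t).2.2 A hA.measurableSet
    have hclosed (A : Set X) (hA : IsClosed A) : (μ : Measure X) A = (ν : Measure X) A :=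
      le_antisymm
        (hM.measure_le_of_forall_le_fmExpand hgen hA ht fun r hr => (hadm A hA r hr).1)
        (hM.measure_le_of_forall_le_fmExpand hgen hA ht fun r hr => (hadm A hA r hr).2)
    exact ProbabilityMeasure.toMeasure_injective
      (ext_of_generate_finite _ (BorelSpace.measurable_eq.trans borel_eq_generateFrom_isClosed)
        isPiSystem_isClosed hclosed (by simp))
  · have hself := hM.prokSet_self (μ := (μ : Measure X)) one_pos
    exact (fuzzyProkhorov_eq_one_iff_prokSet_eq_Ioo (hself ▸ nonempty_Ioo.2 one_pos)).2 hself
end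
end

section
/- Let (X, M, *) be a compact fuzzy metric space with the Łukasiewicz t-norm. The map x ↦ δ_x from X to P(X) (with Dirac measures) is an isometric embedding: M̂(δ_x, δ_y, t) = M(x, y, t) for all x, y ∈ X and t > 0. -/
open Set MeasureTheory Filter Topology

noncomputable section

/-! Testing the Borel set `A = {x}` (the topology generated by the balls is T1) shows that no radius `r ≤ 1 - M x y t` is admissible, since the ball
`B(x, r, t)` then misses `y`; conversely, for `r > 1 - M x y t` every set containing `x` has an
`r,t`-expansion containing `y` (and symmetrically), so the admissible radii form the interval
`(1 - M x y t, 1)`, whose infimum is `1 - M x y t`. -/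

section

variable {X : Type*} {M : X → X → ℝ → ℝ} {star : ℝ → ℝ → ℝ}

lemma IsFuzzyMetric.self_eq_one_s17 (hM : IsFuzzyMetric M star) (x : X) {t : ℝ} (ht : 0 < t) :
    M x x t = 1 :=
  (hM.eq_one_iff x x t ht).mpr rfl

lemma GeneratesTopology.isOpen_fmBall [TopologicalSpace X] (hgen : GeneratesTopology M) (x : X)
    {r t : ℝ} (hr : 0 < r) (hr1 : r < 1) (ht : 0 < t) : IsOpen (fmBall M x r t) :=
  hgen.isOpen ⟨x, r, t, hr, hr1, ht, rfl⟩

lemma GeneratesTopology.t1Space [TopologicalSpace X] (hgen : GeneratesTopology M)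
    (hM : IsFuzzyMetric M star) : T1Space X := by
  refine t1Space_iff_exists_open.mpr fun x y hxy => ?_
  have hlt : M x y 1 < 1 :=
    (hM.le_one x y 1 one_pos).lt_of_ne fun h => hxy ((hM.eq_one_iff x y 1 one_pos).mp h)
  have hpos : 0 < M x y 1 := hM.pos x y 1 one_pos
  refine ⟨fmBall M x (1 - M x y 1) 1,
    hgen.isOpen_fmBall x (by linarith) (by linarith) one_pos, ?_, ?_⟩
  · change 1 - (1 - M x y 1) < M x x 1
    rw [hM.self_eq_one_s17 x one_pos]
    linarith
  · change ¬ 1 - (1 - M x y 1) < M x y 1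
    simp

lemma fmExpand_singleton (x : X) (r t : ℝ) : fmExpand M {x} r t = fmBall M x r t := by
  simp [fmExpand]

lemma dirac_le_dirac_fmExpand [MeasurableSpace X] [MeasurableSingletonClass X]
    {x y : X} {r t : ℝ} (hxy : 1 - r < M x y t) (A : Set X) :
    Measure.dirac x A ≤ Measure.dirac y (fmExpand M A r t) := by
  by_cases hxA : x ∈ A
  · have hy : y ∈ fmExpand M A r t := mem_biUnion hxA hxy
    rw [Measure.dirac_apply_of_mem hy]
    exact prob_le_one
  · rw [Measure.dirac_apply, indicator_of_notMem hxA]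
    exact zero_le

lemma prokSet_dirac [TopologicalSpace X] [MeasurableSpace X] [BorelSpace X]
    (hM : IsFuzzyMetric M star) (hgen : GeneratesTopology M) (x y : X) {t : ℝ} (ht : 0 < t) :
    prokSet M (Measure.dirac x) (Measure.dirac y) t = Ioo (1 - M x y t) 1 := by
  have := hgen.t1Space hM
  ext r
  constructor
  · rintro ⟨hr0, hr1, hA⟩
    refine ⟨?_, hr1⟩
    by_contra! hr
    have hy : y ∉ fmBall M x r t := fun hy : 1 - r < M x y t => by linarith
    have hball : Measure.dirac y (fmBall M x r t) = 0 := by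
      rw [Measure.dirac_apply, indicator_of_notMem hy]
    have h := (hA {x} (measurableSet_singleton x)).1
    rw [fmExpand_singleton, hball, zero_add, Measure.dirac_apply_of_mem (mem_singleton x)] at h
    exact (ENNReal.ofReal_lt_one.mpr hr1).not_ge h
  · rintro ⟨hr, hr1⟩
    have hxy : 1 - r < M x y t := by linarith
    have hyx : 1 - r < M y x t := hM.symm x y t ht ▸ hxy
    refine ⟨by linarith [hM.le_one x y t ht], hr1, fun A _ => ⟨?_, ?_⟩⟩
    · exact (dirac_le_dirac_fmExpand hxy A).trans le_self_add
    · exact (dirac_le_dirac_fmExpand hyx A).trans le_self_add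

end

theorem fuzzyProkhorov_dirac_general {X : Type*} [TopologicalSpace X]
    [MeasurableSpace X] [BorelSpace X]
    (M : X → X → ℝ → ℝ) (hM : IsFuzzyMetric M luk) (hgen : GeneratesTopology M)
    (x y : X) (t : ℝ) (ht : 0 < t) :
    fuzzyProkhorov M (Measure.dirac x) (Measure.dirac y) t = M x y t := by
  rw [fuzzyProkhorov, prokSet_dirac hM hgen x y ht,
    csInf_Ioo (by linarith [hM.pos x y t ht])]
  ring

/-- `x ↦ δ_x` is an isometric embedding of `X` into `P(X)`. -/
theorem fuzzyProkhorov_dirac {X : Type*} [TopologicalSpace X] [CompactSpace X]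
    [MeasurableSpace X] [BorelSpace X]
    (M : X → X → ℝ → ℝ) (hM : IsFuzzyMetric M luk) (hgen : GeneratesTopology M)
    (x y : X) (t : ℝ) (ht : 0 < t) :
    fuzzyProkhorov M (Measure.dirac x) (Measure.dirac y) t = M x y t :=
  fuzzyProkhorov_dirac_general M hM hgen x y t ht
end
end
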